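/- Barrier estimates for the power function. Let γ ≥ 1 and define φ(x) = |x|^{−γ} for x ∈ ℝⁿ∖{0}. (i) For every σ > 0, setting d = γσ^{−γ−2}, the paraboloid P(x) = σ^{−γ} + (d/2)σ² − (d/2)|x|² satisfies φ(x) ≥ P(x) for all x ≠ 0, with equality when |x| = σ. (ii) There exists c̄ ∈ (0,1) depending only on n and γ such that for every x₀ ≠ 0, writing σ = |x₀|, ξ = x₀/σ, d = γσ^{−γ−2}, and Q(x) = σ^{−γ} + (d/4)σ² − d|x − x₀/2|², one has φ(x) − Q(x) ≥ ((γ+1)d/2)·((x−x₀)·ξ)² for all x ∈ B_{c̄σ}(x₀) (in particular Q touches φ from below at x₀). -/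

import Mathlib

open Metric

noncomputable section

abbrev En (n : ℕ) := EuclideanSpace ℝ (Fin n)

/-!
Both estimates reduce to one-variable inequalities for `t ↦ t ^ (-p)`. For (i), with
`t = |x| / σ`, the tangent-line bound `t ^ (-γ) ≥ 1 - γ (t - 1)` exceeds `1 + γ/2 - γ/2 t²` by
`γ/2 (t - 1)²`. For (ii), write `|x|² = σ² (1 + 2a + b²)` with `a = (x - x₀)·x₀ / σ²` and
`b = |x - x₀| / σ`, so that `|a| ≤ b`; after dividing by `σ^(-γ)` the claim is a scalar
inequality in `a, b`. It follows from a second-order Taylor lower bound for `(1 + w) ^ (-γ/2)`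
at `w = 2a + b²`: for small `b` the second derivative stays close to its value at `0`, which
beats the coefficient `(γ+1)γ/2` of `a²`, and the error terms of order `b³` are absorbed by the
`γ/2 b²` left over from the first-order terms.
-/

lemma one_add_mul_le_rpow_one_add_of_nonpos {s p : ℝ} (hs : -1 < s) (hp : p ≤ 0) :
    1 + p * s ≤ (1 + s) ^ p := by
  have hpos : 0 < 1 + s := by linarith
  have hlog : Real.log (1 + s) ≤ s := by linarith [Real.log_le_sub_one_of_pos hpos]
  calc 1 + p * s ≤ Real.log (1 + s) * p + 1 := by nlinarith
    _ ≤ Real.exp (Real.log (1 + s) * p) := Real.add_one_le_exp _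
    _ = (1 + s) ^ p := (Real.rpow_def_of_pos hpos p).symm

lemma ConvexOn.add_mul_sub_le_of_hasDerivAt {D : Set ℝ} {f : ℝ → ℝ} {f' x y : ℝ}
    (hf : ConvexOn ℝ D f) (hx : x ∈ D) (hy : y ∈ D) (hf' : HasDerivAt f f' x) :
    f x + f' * (y - x) ≤ f y := by
  rcases lt_trichotomy x y with hxy | rfl | hxy
  · have h := hf.le_slope_of_hasDerivAt hx hy hxy hf'
    rw [slope_def_field, le_div_iff₀ (sub_pos.2 hxy)] at h
    linarith
  · simp
  · have h := hf.slope_le_of_hasDerivAt hy hx hxy hf'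
    rw [slope_def_field, div_le_iff₀ (sub_pos.2 hxy)] at h
    linarith

lemma add_mul_add_mul_sq_le_of_hasDerivAt {D : Set ℝ} (hD : Convex ℝ D) (hDo : IsOpen D)
    {f f' f'' : ℝ → ℝ} {c x y : ℝ} (hx : x ∈ D) (hy : y ∈ D)
    (hf : ∀ z ∈ D, HasDerivAt f (f' z) z) (hf' : ∀ z ∈ D, HasDerivAt f' (f'' z) z)
    (hc : ∀ z ∈ D, c ≤ f'' z) :
    f x + f' x * (y - x) + c / 2 * (y - x) ^ 2 ≤ f y := by
  set g : ℝ → ℝ := fun z ↦ f z - c / 2 * (z - x) ^ 2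
  have hg : ∀ z ∈ D, HasDerivAt g (f' z - c * (z - x)) z := fun z hz ↦ by
    refine ((hf z hz).sub ((((hasDerivAt_id' z).sub_const x).fun_pow 2).const_mul
      (c / 2))).congr_deriv ?_
    simp only [Nat.cast_ofNat, Nat.add_one_sub_one, pow_one, mul_one]
    ring
  have hg' : ∀ z ∈ D, HasDerivAt (fun z ↦ f' z - c * (z - x)) (f'' z - c) z := fun z hz ↦
    ((hf' z hz).sub (((hasDerivAt_id' z).sub_const x).const_mul c)).congr_deriv (by ring)
  have hconv : ConvexOn ℝ D g := by
    refine convexOn_of_hasDerivWithinAt2_nonneg (f' := fun z ↦ f' z - c * (z - x))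
      (f'' := fun z ↦ f'' z - c) hD
      (fun z hz ↦ (hg z hz).continuousAt.continuousWithinAt) ?_ ?_ ?_ <;> rw [hDo.interior_eq]
    · exact fun z hz ↦ (hg z hz).hasDerivWithinAt
    · exact fun z hz ↦ (hg' z hz).hasDerivWithinAt
    · exact fun z hz ↦ sub_nonneg.2 (hc z hz)
  have := hconv.add_mul_sub_le_of_hasDerivAt hx hy (hg x hx)
  simp only [g, sub_self] at this
  linarith

lemma one_sub_mul_add_mul_sq_le_rpow_neg {q r w : ℝ} (hq : 0 ≤ q) (hr : 0 < r) (hw : -1 < w)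
    (hwr : w < r) :
    1 - q * w + q * (q + 1) / 2 * (1 + r) ^ (-q - 2) * w ^ 2 ≤ (1 + w) ^ (-q) := by
  have key := add_mul_add_mul_sq_le_of_hasDerivAt (convex_Ioo (-1) r) isOpen_Ioo
    (f := fun z ↦ (1 + z) ^ (-q)) (f' := fun z ↦ -q * (1 + z) ^ (-q - 1))
    (f'' := fun z ↦ q * (q + 1) * (1 + z) ^ (-q - 2)) (c := q * (q + 1) * (1 + r) ^ (-q - 2))
    (x := 0) (y := w) ⟨by norm_num, hr⟩ ⟨hw, hwr⟩ ?_ ?_ ?_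
  · simp only [add_zero, Real.one_rpow, sub_zero] at key
    linarith
  · intro z hz
    have hz' : 1 + z ≠ 0 := by linarith [hz.1]
    exact (((hasDerivAt_id' z).const_add 1).rpow_const (Or.inl hz')).congr_deriv (by ring)
  · intro z hz
    have hz' : 1 + z ≠ 0 := by linarith [hz.1]
    refine ((((hasDerivAt_id' z).const_add 1).rpow_const (p := -q - 1) (Or.inl hz')).const_mul
      (-q)).congr_deriv ?_
    rw [show -q - 1 - 1 = -q - 2 by ring]
    ring
  · intro z hz
    have h := Real.rpow_le_rpow_of_nonpos (by linarith [hz.1] : 0 < 1 + z)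
      (by linarith [hz.2] : 1 + z ≤ 1 + r) (by linarith : -q - 2 ≤ 0)
    have : 0 ≤ q * (q + 1) := by positivity
    exact mul_le_mul_of_nonneg_left h this

lemma Real.rpow_sub_two {x : ℝ} (hx : x ≠ 0) (y : ℝ) : x ^ (y - 2) = x ^ y / x ^ 2 := by
  exact_mod_cast Real.rpow_sub_natCast hx y 2

lemma paraboloid_le_rpow_neg {γ σ r : ℝ} (hγ : 0 ≤ γ) (hσ : 0 < σ) (hr : 0 < r) :
    σ ^ (-γ) + γ * σ ^ (-γ - 2) / 2 * σ ^ 2 - γ * σ ^ (-γ - 2) / 2 * r ^ 2 ≤ r ^ (-γ) := by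
  set t := r / σ
  have ht : 0 < t := by positivity
  have hrt : r = σ * t := (mul_div_cancel₀ r hσ.ne').symm
  have hbernoulli := one_add_mul_le_rpow_one_add_of_nonpos (s := t - 1) (p := -γ) (by linarith)
    (by linarith)
  rw [add_sub_cancel] at hbernoulli
  calc σ ^ (-γ) + γ * σ ^ (-γ - 2) / 2 * σ ^ 2 - γ * σ ^ (-γ - 2) / 2 * r ^ 2
      = σ ^ (-γ) * (1 + γ / 2 - γ / 2 * t ^ 2) := by
        rw [hrt, Real.rpow_sub_two hσ.ne']
        field_simp
    _ ≤ σ ^ (-γ) * t ^ (-γ) := by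
        gcongr
        nlinarith [sq_nonneg (t - 1)]
    _ = r ^ (-γ) := by rw [hrt, Real.mul_rpow hσ.le ht.le]

/-- Chosen so that for `w < 3 * barrierRadius γ` the second derivative of `(1 + w) ^ (-γ/2)` is at
least `(γ+1)/(γ+2)` times its value at `0`, and so that `(γ + 2) b ≤ 1`. -/
def barrierRadius (γ : ℝ) : ℝ := 1 / (2 * (γ + 2) * (γ + 4))

lemma barrierRadius_pos {γ : ℝ} (hγ : 0 ≤ γ) : 0 < barrierRadius γ := by
  unfold barrierRadius; positivity

lemma barrierRadius_lt_one {γ : ℝ} (hγ : 0 ≤ γ) : barrierRadius γ < 1 := by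
  unfold barrierRadius
  rw [div_lt_one (by positivity)]
  nlinarith

lemma barrierRadius_mul_le {γ : ℝ} (hγ : 0 ≤ γ) : (γ + 2) * barrierRadius γ ≤ 1 / 8 := by
  unfold barrierRadius
  rw [mul_one_div, div_le_div_iff₀ (by positivity) (by norm_num)]
  nlinarith

lemma touching_estimate_scalar {γ a b : ℝ} (hγ : 0 ≤ γ) (hab : |a| ≤ b)
    (hb : b < barrierRadius γ) :
    (γ + 1) * γ / 2 * a ^ 2 ≤ (1 + (2 * a + b ^ 2)) ^ (-(γ / 2)) - 1 + γ * a + γ * b ^ 2 := by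
  set r := 3 * barrierRadius γ
  set θ := (1 + r) ^ (-(γ / 2) - 2)
  have hβ := barrierRadius_pos hγ
  have hθ : γ + 1 ≤ (γ + 2) * θ := by
    have hbern := one_add_mul_le_rpow_one_add_of_nonpos (s := r) (p := -(γ / 2) - 2)
      (by linarith) (by linarith)
    have hr : (γ / 2 + 2) * r * (γ + 2) = 3 / 4 := by
      simp only [r, barrierRadius]
      field_simp
      ring
    nlinarith
  have hθ1 : θ ≤ 1 := Real.rpow_le_one_of_one_le_of_nonpos (by linarith) (by linarith)
  have hb0 : 0 ≤ b := (abs_nonneg a).trans hab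
  obtain ⟨hab₁, hab₂⟩ := abs_le.1 hab
  have hbγ : (γ + 2) * b ≤ 1 := by nlinarith [barrierRadius_mul_le hγ]
  have hb1 : b ≤ 1 := by nlinarith
  have htaylor := one_sub_mul_add_mul_sq_le_rpow_neg (q := γ / 2) (r := r) (w := 2 * a + b ^ 2)
    (by positivity) (by positivity) (by nlinarith) (by nlinarith)
  have hcross : -b ^ 3 ≤ a * b ^ 2 := by nlinarith [sq_nonneg b]
  have hK : 0 ≤ γ * (γ + 2) * θ := by positivity
  have hquad : (γ + 1) * γ / 2 * a ^ 2
      ≤ γ / 2 * b ^ 2 + γ / 2 * (γ / 2 + 1) / 2 * θ * (2 * a + b ^ 2) ^ 2 := by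
    nlinarith [mul_le_mul_of_nonneg_left hθ (by positivity : 0 ≤ γ * a ^ 2),
      mul_le_mul_of_nonneg_left hcross hK,
      mul_le_mul_of_nonneg_left hθ1 (by positivity : 0 ≤ γ * (γ + 2) * b ^ 3),
      mul_le_mul_of_nonneg_left hbγ (by positivity : 0 ≤ γ * b ^ 2),
      mul_nonneg hK (pow_nonneg hb0 4)]
  linarith

lemma touching_estimate {E : Type*} [NormedAddCommGroup E] [InnerProductSpace ℝ E]
    {γ : ℝ} (hγ : 0 ≤ γ) {x₀ x : E} (hx₀ : x₀ ≠ 0)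
    (hx : x ∈ ball x₀ (barrierRadius γ * ‖x₀‖)) :
    (γ + 1) * (γ * ‖x₀‖ ^ (-γ - 2)) / 2 * ((inner ℝ (x - x₀) (‖x₀‖⁻¹ • x₀) : ℝ)) ^ 2
      ≤ ‖x‖ ^ (-γ) - (‖x₀‖ ^ (-γ) + γ * ‖x₀‖ ^ (-γ - 2) / 4 * ‖x₀‖ ^ 2
        - γ * ‖x₀‖ ^ (-γ - 2) * ‖x - (1 / 2 : ℝ) • x₀‖ ^ 2) := by
  set σ := ‖x₀‖
  have hσ : 0 < σ := norm_pos_iff.2 hx₀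
  set a := inner ℝ (x - x₀) x₀ / σ ^ 2
  set b := ‖x - x₀‖ / σ
  have hab : |a| ≤ b := by
    rw [abs_div, abs_of_pos (by positivity : 0 < σ ^ 2), div_le_div_iff₀ (by positivity) hσ]
    nlinarith [abs_real_inner_le_norm (x - x₀) x₀]
  have hb : b < barrierRadius γ := by
    rw [mem_ball, dist_eq_norm] at hx
    exact (div_lt_iff₀ hσ).2 hx
  have hnorm : ‖x‖ ^ 2 = σ ^ 2 * (1 + (2 * a + b ^ 2)) := by
    rw [show x = x₀ + (x - x₀) by abel, norm_add_sq_real, real_inner_comm]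
    simp only [a, b]
    field_simp
    ring
  have hhalf : ‖x - (1 / 2 : ℝ) • x₀‖ ^ 2 = σ ^ 2 * (b ^ 2 + a + 1 / 4) := by
    rw [show x - (1 / 2 : ℝ) • x₀ = (x - x₀) + (1 / 2 : ℝ) • x₀ by module, norm_add_sq_real,
      real_inner_smul_right, norm_smul, Real.norm_of_nonneg (by norm_num : (0 : ℝ) ≤ 1 / 2)]
    simp only [a, b]
    field_simp
    ring
  have hinner : inner ℝ (x - x₀) (σ⁻¹ • x₀) = σ * a := by
    rw [real_inner_smul_right]
    simp only [a]
    field_simp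
  have hφ : ‖x‖ ^ (-γ) = σ ^ (-γ) * (1 + (2 * a + b ^ 2)) ^ (-(γ / 2)) := by
    have hsq : ∀ v : ℝ, 0 ≤ v → (v ^ 2) ^ (-(γ / 2)) = v ^ (-γ) := fun v hv ↦ by
      rw [← Real.rpow_natCast, ← Real.rpow_mul hv]
      ring_nf
    have h1 : 0 ≤ 1 + (2 * a + b ^ 2) := by nlinarith [abs_le.1 hab, sq_nonneg (1 - b)]
    rw [← hsq _ (norm_nonneg x), hnorm, Real.mul_rpow (by positivity) h1, hsq σ hσ.le]
  have key := mul_le_mul_of_nonneg_left (touching_estimate_scalar hγ hab hb)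
    (Real.rpow_nonneg hσ.le (-γ))
  rw [hinner, hhalf, hφ, Real.rpow_sub_two hσ.ne']
  calc _ = σ ^ (-γ) * ((γ + 1) * γ / 2 * a ^ 2) := by field_simp
    _ ≤ _ := key
    _ = _ := by field_simp; ring

/-- **Barrier estimates for the power function** `φ(x) = |x|^{−γ}`, `γ ≥ 1`.
(i) For every `σ > 0`, with `d = γ σ^{−γ−2}`, the paraboloid
`P(x) = σ^{−γ} + (d/2)σ² − (d/2)|x|²` satisfies `φ ≥ P` away from the origin,
with equality on `|x| = σ`.
(ii) There is `c̄ ∈ (0,1)` such that for `x₀ ≠ 0`, `σ = |x₀|`, `ξ = x₀/σ`,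
`Q(x) = σ^{−γ} + (d/4)σ² − d|x − x₀/2|²`, one has
`φ(x) − Q(x) ≥ ((γ+1)d/2)((x−x₀)·ξ)²` on `B_{c̄σ}(x₀)`. -/
theorem barrier_estimates (n : ℕ) (γ : ℝ) (hγ : 1 ≤ γ) :
    (∀ σ : ℝ, 0 < σ →
      (∀ x : En n, x ≠ 0 →
        σ ^ (-γ) + γ * σ ^ (-γ - 2) / 2 * σ ^ 2 - γ * σ ^ (-γ - 2) / 2 * ‖x‖ ^ 2
          ≤ ‖x‖ ^ (-γ)) ∧
      (∀ x : En n, ‖x‖ = σ →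
        ‖x‖ ^ (-γ)
          = σ ^ (-γ) + γ * σ ^ (-γ - 2) / 2 * σ ^ 2 - γ * σ ^ (-γ - 2) / 2 * ‖x‖ ^ 2)) ∧
    (∃ cbar : ℝ, 0 < cbar ∧ cbar < 1 ∧
      ∀ x₀ : En n, x₀ ≠ 0 →
        ∀ x ∈ ball x₀ (cbar * ‖x₀‖),
          (γ + 1) * (γ * ‖x₀‖ ^ (-γ - 2)) / 2 *
              ((inner ℝ (x - x₀) (‖x₀‖⁻¹ • x₀) : ℝ)) ^ 2
            ≤ ‖x‖ ^ (-γ) -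
              (‖x₀‖ ^ (-γ) + γ * ‖x₀‖ ^ (-γ - 2) / 4 * ‖x₀‖ ^ 2
                - γ * ‖x₀‖ ^ (-γ - 2) * ‖x - (1 / 2 : ℝ) • x₀‖ ^ 2)) := by
  have hγ₀ : 0 ≤ γ := by linarith
  refine ⟨fun σ hσ ↦ ⟨fun x hx ↦ ?_, fun x hx ↦ ?_⟩, ⟨barrierRadius γ, barrierRadius_pos hγ₀,
    barrierRadius_lt_one hγ₀, fun x₀ hx₀ x hx ↦ touching_estimate hγ₀ hx₀ hx⟩⟩
  · exact paraboloid_le_rpow_neg hγ₀ hσ (norm_pos_iff.2 hx)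
  · rw [hx]
    ring
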